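/- arXiv:2302.07294 — 5 statements merged into one kernel-verified Lean document; each statement's English description precedes it below -/
import Mathlib

section
/- The calibrator obtained by integrating over $\epsilon$: $F(u) = \int_0^1 \epsilon u^{\epsilon-1} d\epsilon = (1 - u + u \ln u)/(u(-\ln u)^2)$ for $u \in (0,1)$, satisfies $\int_0^1 F(u)\, du \le 1$ and is nonincreasing, hence is a valid p-to-e calibrator. -/
open MeasureTheory Set
open scoped ENNReal

/-! Write `F(u) = ∫₀¹ ε u^(ε-1) dε`, a mixture of the calibrators `u ↦ ε u^(ε-1)`. The closed
form follows from the primitive `u^(ε-1) (ε / log u - 1 / (log u)²)` in `ε`. Each calibrator in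
the mixture has integral `1` over `u ∈ (0,1)`, so by Tonelli `∫₀¹ F = 1`; each is nonincreasing
in `u` since `ε - 1 < 0`, hence so is `F`. -/

noncomputable def mixtureCalibrator (u : ℝ) : ℝ :=
  ∫ ε in Ioo (0 : ℝ) 1, ε * u ^ (ε - 1)

lemma continuous_mul_rpow_sub_one {u : ℝ} (hu : 0 < u) :
    Continuous fun ε : ℝ => ε * u ^ (ε - 1) :=
  continuous_id.mul ((Real.continuous_const_rpow hu.ne').comp (continuous_sub_right 1))

lemma hasDerivAt_primitive_mul_rpow_sub_one {u : ℝ} (hu0 : 0 < u) (hu1 : u ≠ 1) (ε : ℝ) :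
    HasDerivAt (fun ε : ℝ => u ^ (ε - 1) * (ε / Real.log u - 1 / Real.log u ^ 2))
      (ε * u ^ (ε - 1)) ε := by
  have hlog : Real.log u ≠ 0 := Real.log_ne_zero_of_pos_of_ne_one hu0 hu1
  have hpow := ((hasDerivAt_id ε).sub_const 1).const_rpow hu0
  have hlin := ((hasDerivAt_id ε).div_const (Real.log u)).sub_const (1 / Real.log u ^ 2)
  refine (hpow.mul hlin).congr_deriv ?_
  simp only [id]
  field_simp
  ring

lemma mixtureCalibrator_eq {u : ℝ} (hu0 : 0 < u) (hu1 : u ≠ 1) :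
    mixtureCalibrator u = (1 - u + u * Real.log u) / (u * Real.log u ^ 2) := by
  have hlog : Real.log u ≠ 0 := Real.log_ne_zero_of_pos_of_ne_one hu0 hu1
  rw [mixtureCalibrator, ← integral_Ioc_eq_integral_Ioo,
    ← intervalIntegral.integral_of_le zero_le_one,
    intervalIntegral.integral_eq_sub_of_hasDerivAt
      (fun ε _ => hasDerivAt_primitive_mul_rpow_sub_one hu0 hu1 ε)
      ((continuous_mul_rpow_sub_one hu0).intervalIntegrable 0 1)]
  rw [sub_self, Real.rpow_zero, zero_sub, Real.rpow_neg_one]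
  field_simp
  ring

lemma integrableOn_mul_rpow_sub_one {ε : ℝ} (hε : 0 < ε) :
    IntegrableOn (fun u : ℝ => ε * u ^ (ε - 1)) (Ioo 0 1) := by
  have h := ((intervalIntegral.intervalIntegrable_rpow' (a := 0) (b := 1)
    (r := ε - 1) (by linarith)).const_mul ε)
  rw [intervalIntegrable_iff_integrableOn_Ioc_of_le zero_le_one] at h
  exact h.mono_set Ioo_subset_Ioc_self

lemma integral_mul_rpow_sub_one {ε : ℝ} (hε : 0 < ε) :
    ∫ u in Ioo (0 : ℝ) 1, ε * u ^ (ε - 1) = 1 := by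
  rw [← integral_Ioc_eq_integral_Ioo, ← intervalIntegral.integral_of_le zero_le_one,
    intervalIntegral.integral_const_mul, integral_rpow (Or.inl (by linarith)), sub_add_cancel,
    Real.one_rpow, Real.zero_rpow hε.ne', sub_zero, mul_one_div_cancel hε.ne']

lemma lintegral_ofReal_mul_rpow_sub_one {ε : ℝ} (hε : 0 < ε) :
    ∫⁻ u in Ioo (0 : ℝ) 1, ENNReal.ofReal (ε * u ^ (ε - 1)) = 1 := by
  rw [← ofReal_integral_eq_lintegral_ofReal (integrableOn_mul_rpow_sub_one hε),
    integral_mul_rpow_sub_one hε, ENNReal.ofReal_one]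
  exact (ae_restrict_iff' measurableSet_Ioo).2 <| .of_forall fun u hu =>
    mul_nonneg hε.le (Real.rpow_nonneg hu.1.le _)

lemma lintegral_ofReal_mixtureCalibrator :
    ∫⁻ u in Ioo (0 : ℝ) 1, ENNReal.ofReal (mixtureCalibrator u) = 1 := by
  have hinner : EqOn (fun u => ENNReal.ofReal (mixtureCalibrator u))
      (fun u => ∫⁻ ε in Ioo (0 : ℝ) 1, ENNReal.ofReal (ε * u ^ (ε - 1))) (Ioo 0 1) :=
    fun u hu => ofReal_integral_eq_lintegral_ofReal
      ((continuous_mul_rpow_sub_one hu.1).integrableOn_Icc.mono_set Ioo_subset_Icc_self)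
      ((ae_restrict_iff' measurableSet_Ioo).2 <| .of_forall fun ε hε =>
        mul_nonneg hε.1.le (Real.rpow_nonneg hu.1.le _))
  have hmeas : Measurable (Function.uncurry fun u ε : ℝ => ENNReal.ofReal (ε * u ^ (ε - 1))) :=
    ENNReal.measurable_ofReal.comp
      (measurable_snd.mul (measurable_fst.pow (measurable_snd.sub measurable_const)))
  rw [setLIntegral_congr_fun measurableSet_Ioo hinner,
    lintegral_lintegral_swap hmeas.aemeasurable,
    setLIntegral_congr_fun measurableSet_Ioo fun ε hε => lintegral_ofReal_mul_rpow_sub_one hε.1]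
  simp [Real.volume_Ioo]

lemma antitoneOn_mixtureCalibrator : AntitoneOn mixtureCalibrator (Ioi 0) := by
  intro u hu v hv huv
  exact setIntegral_mono_on
    ((continuous_mul_rpow_sub_one hv).integrableOn_Icc.mono_set Ioo_subset_Icc_self)
    ((continuous_mul_rpow_sub_one hu).integrableOn_Icc.mono_set Ioo_subset_Icc_self)
    measurableSet_Ioo fun ε hε =>
      mul_le_mul_of_nonneg_left (Real.rpow_le_rpow_of_nonpos hu huv (by linarith [hε.2])) hε.1.le

/-- The mixture calibrator `F(u) = ∫_0^1 ε u^{ε-1} dε = (1 - u + u log u)/(u (log u)^2)`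
on `(0,1)` satisfies the integral identity, has `∫_0^1 F(u) du ≤ 1`, and is
nonincreasing; hence it is a valid p-to-e calibrator. -/
theorem mixture_calibrator_valid :
    (∀ u ∈ Set.Ioo (0 : ℝ) 1,
      (∫ ε in Set.Ioo (0 : ℝ) 1, ε * u ^ (ε - 1))
        = (1 - u + u * Real.log u) / (u * (Real.log u) ^ 2)) ∧
    (∫⁻ u in Set.Ioo (0 : ℝ) 1,
        ENNReal.ofReal ((1 - u + u * Real.log u) / (u * (Real.log u) ^ 2)) ≤ 1) ∧
    AntitoneOn (fun u : ℝ => (1 - u + u * Real.log u) / (u * (Real.log u) ^ 2))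
      (Set.Ioo (0 : ℝ) 1) := by
  have hF : EqOn mixtureCalibrator
      (fun u => (1 - u + u * Real.log u) / (u * Real.log u ^ 2)) (Ioo 0 1) :=
    fun u hu => mixtureCalibrator_eq hu.1 hu.2.ne
  refine ⟨hF, ?_, (antitoneOn_mixtureCalibrator.mono Ioo_subset_Ioi_self).congr hF⟩
  rw [← setLIntegral_congr_fun measurableSet_Ioo fun u hu => congrArg ENNReal.ofReal (hF hu),
    lintegral_ofReal_mixtureCalibrator]
end

section
/- The eBH procedure controls the FDR under average validity: if nonnegative random variables $e_1, \dots, e_N$ satisfy $\sum_{j \in \mathcal{H}_0} \mathbb{E}[e_j] \le N$ where $\mathcal{H}_0 \subseteq [N]$ is the set of true nulls, and the eBH filter at level $\alpha$ rejects the set $\mathcal{R} = \{j : e_j \ge e_{(i_{\max})}\}$ with $i_{\max} = \max\{i : e_{(i)} \ge N/(\alpha i)\}$ (and $\mathcal{R} = \emptyset$ if no such $i$ exists), where $e_{(1)} \ge \dots \ge e_{(N)}$ are the order statistics, then $\mathbb{E}[|\mathcal{R} \cap \mathcal{H}_0| / \max\{1, |\mathcal{R}|\}] \le \alpha$. -/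
open MeasureTheory
open scoped ENNReal

/-- The eBH rejection set at level `α` for e-values `e : Fin N → ℝ`, given a
permutation `σ` sorting the e-values in decreasing order (so the `i`-th order
statistic is `e (σ i)` for the 1-indexed rank `i.val + 1`): let
`i_max = max {i : e_(i) ≥ N / (α i)}` and reject `{j : e j ≥ e_(i_max)}`,
or reject nothing if no such `i` exists. -/
noncomputable def eBHReject (N : ℕ) (α : ℝ) (e : Fin N → ℝ) (σ : Equiv.Perm (Fin N)) :
    Set (Fin N) :=
  if h : (Finset.univ.filter
      (fun i : Fin N => (N : ℝ) / (α * ((i : ℕ) + 1)) ≤ e (σ i))).Nonempty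
  then {j : Fin N | e (σ ((Finset.univ.filter
      (fun i : Fin N => (N : ℝ) / (α * ((i : ℕ) + 1)) ≤ e (σ i))).max' h)) ≤ e j}
  else ∅

/-! The eBH rejection set `R` is self-consistent: every rejected `e_j` is at least
`N / (α |R|)`. For any self-consistent `R`, each true null in `R` contributes
`1 / |R| ≤ α e_j / N` to the false discovery proportion, so the FDP is at most
`(α / N) ∑_{j ∈ H0} e_j`, whose expectation is at most `α` by average validity. -/

theorem mul_card_inter_div_le_sum_of_le_card_mul {ι : Type*} [DecidableEq ι]
    (R H0 : Finset ι) (e : ι → ℝ) (hpos : ∀ j ∈ H0, 0 ≤ e j) (c : ℝ)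
    (hR : ∀ j ∈ R, c ≤ R.card * e j) :
    c * (((R ∩ H0).card : ℝ) / max 1 R.card) ≤ ∑ j ∈ H0, e j := by
  rcases R.eq_empty_or_nonempty with rfl | hne
  · simpa using Finset.sum_nonneg hpos
  have hcard : (0 : ℝ) < R.card := by exact_mod_cast hne.card_pos
  rw [max_eq_right (by exact_mod_cast hne.card_pos), mul_div_assoc', div_le_iff₀ hcard]
  calc c * (R ∩ H0).card
      = ∑ _j ∈ R ∩ H0, c := by rw [Finset.sum_const, nsmul_eq_mul, mul_comm]
    _ ≤ ∑ j ∈ R ∩ H0, R.card * e j :=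
        Finset.sum_le_sum fun j hj => hR j (Finset.mem_inter.mp hj).1
    _ = (∑ j ∈ R ∩ H0, e j) * R.card := by rw [← Finset.mul_sum, mul_comm]
    _ ≤ (∑ j ∈ H0, e j) * R.card :=
        mul_le_mul_of_nonneg_right (Finset.sum_le_sum_of_subset_of_nonneg
          Finset.inter_subset_right fun j hj _ => hpos j hj) hcard.le

theorem succ_le_ncard_setOf_le_of_antitone {β : Type*} [Preorder β] {N : ℕ} (e : Fin N → β)
    (σ : Equiv.Perm (Fin N))
    (hsort : ∀ i j : Fin N, i ≤ j → e (σ j) ≤ e (σ i)) (i : Fin N) :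
    (i : ℕ) + 1 ≤ {j | e (σ i) ≤ e j}.ncard := by
  have hsub : (((Finset.Iic i).map σ.toEmbedding : Finset (Fin N)) : Set (Fin N)) ⊆
      {j | e (σ i) ≤ e j} := by
    intro j hj
    obtain ⟨k, hk, rfl⟩ := Finset.mem_map.mp hj
    exact hsort k i (Finset.mem_Iic.mp hk)
  calc (i : ℕ) + 1 = ((Finset.Iic i).map σ.toEmbedding).card := by simp
    _ ≤ {j | e (σ i) ≤ e j}.ncard := by
        rw [← Set.ncard_coe_finset]
        exact Set.ncard_le_ncard hsub

theorem le_ncard_eBHReject_mul {N : ℕ} (α : ℝ) (e : Fin N → ℝ) (hpos : ∀ j, 0 ≤ e j)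
    (σ : Equiv.Perm (Fin N)) (hsort : ∀ i j : Fin N, i ≤ j → e (σ j) ≤ e (σ i))
    (j : Fin N) (hj : j ∈ eBHReject N α e σ) :
    (N : ℝ) / α ≤ (eBHReject N α e σ).ncard * e j := by
  rw [eBHReject] at hj ⊢
  split_ifs at hj ⊢ with h
  · set i := (Finset.univ.filter
      (fun i : Fin N => (N : ℝ) / (α * ((i : ℕ) + 1)) ≤ e (σ i))).max' h
    have hi : (N : ℝ) / (α * ((i : ℕ) + 1)) ≤ e (σ i) :=
      (Finset.mem_filter.mp (Finset.max'_mem _ h)).2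
    have hrank : ((i : ℕ) + 1 : ℝ) ≤ {j | e (σ i) ≤ e j}.ncard := by
      exact_mod_cast succ_le_ncard_setOf_le_of_antitone e σ hsort i
    calc (N : ℝ) / α = ((i : ℕ) + 1) * ((N : ℝ) / (α * ((i : ℕ) + 1))) := by
          field_simp
      _ ≤ ((i : ℕ) + 1) * e j := by gcongr; exact hi.trans hj
      _ ≤ {j | e (σ i) ≤ e j}.ncard * e j := by gcongr; exact hpos j
  · exact absurd hj (Set.notMem_empty j)

theorem eBH_fdp_le {N : ℕ} (hN : 0 < N) {α : ℝ} (hα : 0 < α) (e : Fin N → ℝ)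
    (hpos : ∀ j, 0 ≤ e j) (σ : Equiv.Perm (Fin N))
    (hsort : ∀ i j : Fin N, i ≤ j → e (σ j) ≤ e (σ i)) (H0 : Finset (Fin N)) :
    ((eBHReject N α e σ ∩ ↑H0).ncard : ℝ) / max 1 ((eBHReject N α e σ).ncard : ℝ)
      ≤ α / N * ∑ j ∈ H0, e j := by
  classical
  set R := (eBHReject N α e σ).toFinset
  have hR : ∀ j ∈ R, (N : ℝ) / α ≤ R.card * e j := fun j hj => by
    simpa [R, Set.ncard_eq_toFinset_card'] using
      le_ncard_eBHReject_mul α e hpos σ hsort j (Set.mem_toFinset.mp hj)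
  have hc : (0 : ℝ) < N / α := div_pos (by exact_mod_cast hN) hα
  have hfdp : ((R ∩ H0).card : ℝ) / max 1 R.card ≤ (∑ j ∈ H0, e j) / (N / α) :=
    (le_div_iff₀' hc).mpr
      (mul_card_inter_div_le_sum_of_le_card_mul R H0 e (fun j _ => hpos j) _ hR)
  rw [div_div_eq_mul_div, mul_comm, mul_div_right_comm] at hfdp
  simpa [R, Set.ncard_eq_toFinset_card', Set.toFinset_inter] using hfdp

theorem eBH_fdr_control_general
    {Ω : Type*} [MeasurableSpace Ω] (μ : Measure Ω) [IsProbabilityMeasure μ]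
    (N : ℕ) (hN : 0 < N) (α : ℝ) (hα : α ∈ Set.Ioo (0 : ℝ) 1)
    (e : Fin N → Ω → ℝ) (hpos : ∀ j ω, 0 ≤ e j ω)
    (hInt : ∀ j, Integrable (e j) μ)
    (H0 : Finset (Fin N))
    (havg : ∑ j ∈ H0, ∫ ω, e j ω ∂μ ≤ (N : ℝ))
    (σ : Ω → Equiv.Perm (Fin N))
    (hsort : ∀ ω, ∀ i j : Fin N, i ≤ j → e (σ ω j) ω ≤ e (σ ω i) ω) :
    ∫⁻ ω, ENNReal.ofReal
        (((eBHReject N α (fun j => e j ω) (σ ω) ∩ ↑H0).ncard : ℝ) /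
          (max 1 ((eBHReject N α (fun j => e j ω) (σ ω)).ncard : ℝ))) ∂μ
      ≤ ENNReal.ofReal α := by
  have hNpos : (0 : ℝ) < N := by exact_mod_cast hN
  have hbound_int : Integrable (fun ω => α / N * ∑ j ∈ H0, e j ω) μ :=
    (integrable_finsetSum _ fun j _ => hInt j).const_mul _
  have hαN : 0 ≤ α / N := div_nonneg hα.1.le hNpos.le
  have hbound_nonneg : 0 ≤ᵐ[μ] fun ω => α / N * ∑ j ∈ H0, e j ω :=
    .of_forall fun ω => mul_nonneg hαN (Finset.sum_nonneg fun j _ => hpos j ω)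
  calc _ ≤ ∫⁻ ω, ENNReal.ofReal (α / N * ∑ j ∈ H0, e j ω) ∂μ :=
        lintegral_mono fun ω => ENNReal.ofReal_le_ofReal <|
          eBH_fdp_le hN hα.1 _ (fun j => hpos j ω) (σ ω) (hsort ω) H0
    _ = ENNReal.ofReal (∫ ω, α / N * ∑ j ∈ H0, e j ω ∂μ) :=
        (ofReal_integral_eq_lintegral_ofReal hbound_int hbound_nonneg).symm
    _ ≤ ENNReal.ofReal α := by
        rw [integral_const_mul, integral_finsetSum _ fun j _ => hInt j]
        refine ENNReal.ofReal_le_ofReal ?_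
        calc α / N * ∑ j ∈ H0, ∫ ω, e j ω ∂μ ≤ α / N * N := by gcongr
          _ = α := div_mul_cancel₀ α hNpos.ne'

/-- The eBH procedure controls the FDR under average validity: if the nonnegative
e-values satisfy `∑_{j ∈ H0} E[e_j] ≤ N`, then the FDR of the eBH filter at level
`α` is at most `α`. -/
theorem eBH_fdr_control
    {Ω : Type*} [MeasurableSpace Ω] (μ : Measure Ω) [IsProbabilityMeasure μ]
    (N : ℕ) (hN : 0 < N) (α : ℝ) (hα : α ∈ Set.Ioo (0 : ℝ) 1)
    (e : Fin N → Ω → ℝ) (hmeas : ∀ j, Measurable (e j)) (hpos : ∀ j ω, 0 ≤ e j ω)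
    (hInt : ∀ j, Integrable (e j) μ)
    (H0 : Finset (Fin N))
    (havg : ∑ j ∈ H0, ∫ ω, e j ω ∂μ ≤ (N : ℝ))
    (σ : Ω → Equiv.Perm (Fin N))
    (hsort : ∀ ω, ∀ i j : Fin N, i ≤ j → e (σ ω j) ω ≤ e (σ ω i) ω) :
    ∫⁻ ω, ENNReal.ofReal
        (((eBHReject N α (fun j => e j ω) (σ ω) ∩ ↑H0).ncard : ℝ) /
          (max 1 ((eBHReject N α (fun j => e j ω) (σ ω)).ncard : ℝ))) ∂μ
      ≤ ENNReal.ofReal α :=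
  eBH_fdr_control_general μ N hN α hα e hpos hInt H0 havg σ hsort
end

section
/- If each rejection by eBH at level $\alpha$ requires $e_j \ge N/(\alpha |\mathcal{R}|)$ for all $j \in \mathcal{R}$ where $\mathcal{R}$ is the rejection set, then the false discovery proportion satisfies the deterministic bound $|\mathcal{R} \cap \mathcal{H}_0|/\max\{1,|\mathcal{R}|\} \le (\alpha/N)\sum_{j \in \mathcal{H}_0} e_j$. -/
/-! Every rejected null index carries an e-value of at least `N / (α |R|)`, so the
null e-values sum to at least `|R ∩ H0| · N / (α |R|)`; rescaling by `α / N` gives the bound. -/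

open Finset

theorem card_inter_mul_le_sum_of_le {ι : Type*} [DecidableEq ι] {R H : Finset ι} {e : ι → ℝ} {t : ℝ}
    (he : ∀ j ∈ H, 0 ≤ e j) (ht : ∀ j ∈ R, t ≤ e j) :
    (#(R ∩ H) : ℝ) * t ≤ ∑ j ∈ H, e j :=
  calc (#(R ∩ H) : ℝ) * t = ∑ _j ∈ R ∩ H, t := by rw [sum_const, nsmul_eq_mul]
    _ ≤ ∑ j ∈ R ∩ H, e j := sum_le_sum fun j hj => ht j (mem_inter.mp hj).1
    _ ≤ ∑ j ∈ H, e j := sum_le_sum_of_subset_of_nonneg inter_subset_right fun j hj _ => he j hj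

theorem card_inter_div_card_le_of_le {ι : Type*} [DecidableEq ι] {R H : Finset ι} {e : ι → ℝ} {c : ℝ}
    (hc : 0 < c) (he : ∀ j ∈ H, 0 ≤ e j) (hR : R.Nonempty) (ht : ∀ j ∈ R, c / #R ≤ e j) :
    (#(R ∩ H) : ℝ) / #R ≤ c⁻¹ * ∑ j ∈ H, e j := by
  have hcard : (0 : ℝ) < #R := by exact_mod_cast hR.card_pos
  calc (#(R ∩ H) : ℝ) / #R = c⁻¹ * (#(R ∩ H) * (c / #R)) := by field_simp
    _ ≤ c⁻¹ * ∑ j ∈ H, e j := by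
      gcongr
      exact card_inter_mul_le_sum_of_le he ht

theorem eBH_fdp_deterministic_bound_general
    (N : ℕ) (α : ℝ) (hα : 0 < α)
    (e : Fin N → ℝ) (hpos : ∀ j, 0 ≤ e j)
    (H0 R : Finset (Fin N))
    (hrej : ∀ j ∈ R, (N : ℝ) / (α * R.card) ≤ e j) :
    ((R ∩ H0).card : ℝ) / max 1 (R.card : ℝ) ≤ (α / N) * ∑ j ∈ H0, e j := by
  rcases R.eq_empty_or_nonempty with rfl | hR
  · simpa using mul_nonneg (div_nonneg hα.le N.cast_nonneg) (sum_nonneg fun j _ => hpos j)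
  have hN : (0 : ℝ) < N := by exact_mod_cast Fin.pos hR.choose
  rw [max_eq_right (by exact_mod_cast hR.card_pos), ← inv_div (N : ℝ) α]
  refine card_inter_div_card_le_of_le (div_pos hN hα) (fun j _ => hpos j) hR fun j hj => ?_
  simpa only [div_div, mul_comm α] using hrej j hj

/-- Deterministic FDP bound for eBH-type rejections: if every rejected index `j ∈ R`
satisfies `e j ≥ N / (α |R|)`, then
`|R ∩ H0| / max{1, |R|} ≤ (α / N) ∑_{j ∈ H0} e j`. -/
theorem eBH_fdp_deterministic_bound
    (N : ℕ) (hN : 0 < N) (α : ℝ) (hα : 0 < α)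
    (e : Fin N → ℝ) (hpos : ∀ j, 0 ≤ e j)
    (H0 R : Finset (Fin N))
    (hrej : ∀ j ∈ R, (N : ℝ) / (α * R.card) ≤ e j) :
    ((R ∩ H0).card : ℝ) / max 1 (R.card : ℝ) ≤ (α / N) * ∑ j ∈ H0, e j :=
  eBH_fdp_deterministic_bound_general N α hα e hpos H0 R hrej
end

section
/- The soft-rank e-value is valid: let $R_0, R_1, \dots, R_n$ be exchangeable nonnegative random variables with $\sum_{i=0}^n R_i > 0$ almost surely. Then $e_0 = (n+1) R_0 / \sum_{i=0}^n R_i$ satisfies $\mathbb{E}[e_0] \le 1$ (with equality when the sum is a.s. positive). -/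
open MeasureTheory

/-!
Write `e_i = (n+1) R_i / ∑_j R_j`. The weights `R_i / ∑_j R_j` lie in `[0, 1]` and sum to `1`
almost surely, so their expectations sum to `1`; exchangeability (applied to the transposition
`(i j)`) makes all these expectations equal, hence each is `1 / (n+1)` and `E[e_0] = 1`.
-/

section Exchangeable

variable {Ω ι : Type*} [MeasurableSpace Ω] {μ : Measure Ω} {R : Ω → ι → ℝ}

theorem integral_comp_perm_of_map_eq {π : Equiv.Perm ι} (hR : Measurable R)
    (hexch : μ.map (fun ω => R ω ∘ π) = μ.map R) {f : (ι → ℝ) → ℝ} (hf : Measurable f) :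
    ∫ ω, f (R ω ∘ π) ∂μ = ∫ ω, f (R ω) ∂μ := by
  have hRπ : Measurable fun ω => R ω ∘ π :=
    measurable_pi_lambda _ fun j => (measurable_pi_apply _).comp hR
  rw [← integral_map hRπ.aemeasurable hf.aestronglyMeasurable,
    ← integral_map hR.aemeasurable hf.aestronglyMeasurable, hexch]

end Exchangeable

section SoftRank

variable {ι : Type*} [Fintype ι]

/-- Equal to `0` when `∑ j, x j = 0`, by the convention `x / 0 = 0`. -/
noncomputable def softRank (x : ι → ℝ) (i : ι) : ℝ := x i / ∑ j, x j

theorem softRank_comp_perm (x : ι → ℝ) (π : Equiv.Perm ι) (i : ι) :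
    softRank (x ∘ π) i = softRank x (π i) := by
  simp only [softRank, Function.comp_apply, Equiv.sum_comp π x]

theorem measurable_softRank (i : ι) : Measurable fun x : ι → ℝ => softRank x i :=
  (measurable_pi_apply i).div (Finset.measurable_sum _ fun j _ => measurable_pi_apply j)

theorem softRank_nonneg {x : ι → ℝ} (hx : ∀ j, 0 ≤ x j) (i : ι) : 0 ≤ softRank x i :=
  div_nonneg (hx i) (Finset.sum_nonneg fun j _ => hx j)

theorem softRank_le_one {x : ι → ℝ} (hx : ∀ j, 0 ≤ x j) (i : ι) : softRank x i ≤ 1 :=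
  div_le_one_of_le₀ (Finset.single_le_sum (fun j _ => hx j) (Finset.mem_univ i))
    (Finset.sum_nonneg fun j _ => hx j)

theorem sum_softRank {x : ι → ℝ} (hx : ∑ j, x j ≠ 0) : ∑ i, softRank x i = 1 := by
  simp only [softRank]; rw [← Finset.sum_div, div_self hx]

variable {Ω : Type*} [MeasurableSpace Ω] {μ : Measure Ω} {R : Ω → ι → ℝ}

theorem integrable_softRank [IsFiniteMeasure μ] (hR : Measurable R) (hpos : ∀ ω i, 0 ≤ R ω i)
    (i : ι) : Integrable (fun ω => softRank (R ω) i) μ :=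
  (integrable_const (1 : ℝ)).mono' ((measurable_softRank i).comp hR).aestronglyMeasurable
    (ae_of_all _ fun ω => by
      rw [Real.norm_eq_abs, abs_of_nonneg (softRank_nonneg (hpos ω) i)]
      exact softRank_le_one (hpos ω) i)

theorem integral_softRank_eq_of_exchangeable [DecidableEq ι] (hR : Measurable R)
    (hexch : ∀ π : Equiv.Perm ι, μ.map (fun ω => R ω ∘ π) = μ.map R) (i j : ι) :
    ∫ ω, softRank (R ω) i ∂μ = ∫ ω, softRank (R ω) j ∂μ := by
  have hswap := integral_comp_perm_of_map_eq hR (hexch (Equiv.swap i j)) (measurable_softRank i)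
  simpa only [softRank_comp_perm, Equiv.swap_apply_left] using hswap.symm

theorem integral_softRank_of_exchangeable [IsProbabilityMeasure μ] (hR : Measurable R)
    (hexch : ∀ π : Equiv.Perm ι, μ.map (fun ω => R ω ∘ π) = μ.map R)
    (hpos : ∀ ω i, 0 ≤ R ω i) (hsum : ∀ᵐ ω ∂μ, 0 < ∑ i, R ω i) (i : ι) :
    Fintype.card ι * ∫ ω, softRank (R ω) i ∂μ = 1 := by
  classical
  have htotal : ∑ j, ∫ ω, softRank (R ω) j ∂μ = 1 := by
    rw [← integral_finsetSum _ fun j _ => integrable_softRank hR hpos j]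
    have hone : ∀ᵐ ω ∂μ, ∑ j, softRank (R ω) j = 1 := by
      filter_upwards [hsum] with ω hω using sum_softRank hω.ne'
    simp [integral_congr_ae hone]
  rw [← htotal, Finset.sum_congr rfl fun j _ => integral_softRank_eq_of_exchangeable hR hexch j i,
    Finset.sum_const, Finset.card_univ, nsmul_eq_mul]

end SoftRank

/-- Validity of the soft-rank e-value: if `R 0, R 1, ..., R n` are exchangeable
nonnegative random variables whose sum is a.s. positive, then
`e_0 = (n+1) R 0 / ∑_i R i` satisfies `E[e_0] ≤ 1`, with equality. -/
theorem soft_rank_evalue_valid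
    {Ω : Type*} [MeasurableSpace Ω] (μ : Measure Ω) [IsProbabilityMeasure μ]
    (n : ℕ) (R : Ω → Fin (n + 1) → ℝ) (hR : Measurable R)
    (hexch : ∀ π : Equiv.Perm (Fin (n + 1)), μ.map (fun ω => R ω ∘ π) = μ.map R)
    (hpos : ∀ ω i, 0 ≤ R ω i)
    (hsum : ∀ᵐ ω ∂μ, 0 < ∑ i, R ω i) :
    (∫ ω, ((n : ℝ) + 1) * R ω 0 / (∑ i, R ω i) ∂μ ≤ 1) ∧
      (∫ ω, ((n : ℝ) + 1) * R ω 0 / (∑ i, R ω i) ∂μ = 1) := by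
  have hmain : ∫ ω, ((n : ℝ) + 1) * R ω 0 / (∑ i, R ω i) ∂μ = 1 := by
    have hmean := integral_softRank_of_exchangeable hR hexch hpos hsum 0
    simp only [Fintype.card_fin, Nat.cast_add, Nat.cast_one] at hmean
    simp only [mul_div_assoc, integral_const_mul]
    exact hmean
  exact ⟨hmain.le, hmain⟩
end

section
/- The VS calibrator dominates the calibrator family: for all $u \in (0,1]$, $\sup_{\epsilon \in (0,1)} \epsilon u^{\epsilon-1} = -e^{-1}/(u \ln u)$ if $u \le e^{-1}$, and the supremum equals $1$ (attained in the limit $\epsilon \to 1$) if $u > e^{-1}$; moreover the VS calibrator is not a valid calibrator since $\int_0^1 \mathrm{VS}(u)\,du > 1$. -/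
open scoped ENNReal

open Real Set MeasureTheory

/-!
Writing `L = log u < 0` and `t = -ε L`, one has `ε u^(ε-1) · (-u L) = t e^(-t) ≤ e^(-1)`,
with equality at `t = 1`, i.e. `ε = -1/L`. This choice lies in `(0,1)` exactly when
`u < e^(-1)`; otherwise `ε u^(ε-1) ≤ e^(ε-1) u^(ε-1) = (e u)^(ε-1) ≤ 1`, and the supremum
`1` is approached as `ε → 1`. Near `0` the VS calibrator is `1/(e u |log u|)`, with
antiderivative `-log |log u| / e`, which is unbounded; already on `[exp (-e³), e⁻¹]` it
contributes `3/e > 1`.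
-/

def calibratorValues (u : ℝ) : Set ℝ := {v | ∃ ε ∈ Ioo (0 : ℝ) 1, v = ε * u ^ (ε - 1)}

noncomputable def vsCalibrator (u : ℝ) : ℝ :=
  if u ≤ exp (-1) then -exp (-1) / (u * log u) else 1

lemma mul_rpow_sub_one_le {u : ℝ} (hu₀ : 0 < u) (hu₁ : u < 1) (ε : ℝ) :
    ε * u ^ (ε - 1) ≤ -exp (-1) / (u * log u) := by
  have hL : 0 < -log u := neg_pos.2 (log_neg hu₀ hu₁)
  have key : ε * u ^ (ε - 1) * (u * -log u) = (ε * -log u) * exp (-(ε * -log u)) := by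
    rw [rpow_sub_one hu₀.ne', rpow_def_of_pos hu₀]
    field_simp
  rw [show -exp (-1) / (u * log u) = exp (-1) / (u * -log u) by ring, le_div_iff₀ (by positivity),
    key]
  exact mul_exp_neg_le_exp_neg_one _

lemma inv_neg_log_mul_rpow {u : ℝ} (hu₀ : 0 < u) (hL : log u ≠ 0) :
    (-log u)⁻¹ * u ^ ((-log u)⁻¹ - 1) = -exp (-1) / (u * log u) := by
  rw [rpow_sub_one hu₀.ne', rpow_def_of_pos hu₀, show log u * (-log u)⁻¹ = -1 by field_simp]
  field_simp

lemma mul_rpow_sub_one_le_one {u ε : ℝ} (hu : exp (-1) ≤ u) (hε : ε ≤ 1) :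
    ε * u ^ (ε - 1) ≤ 1 := by
  have hu₀ : 0 < u := (exp_pos _).trans_le hu
  have he : 1 ≤ exp 1 * u := by
    calc (1 : ℝ) = exp 1 * exp (-1) := by rw [← exp_add]; norm_num
      _ ≤ exp 1 * u := by gcongr
  calc ε * u ^ (ε - 1) ≤ exp (ε - 1) * u ^ (ε - 1) := by
        gcongr
        linarith [add_one_le_exp (ε - 1)]
    _ = (exp 1 * u) ^ (ε - 1) := by rw [mul_rpow (exp_pos 1).le hu₀.le, exp_one_rpow]
    _ ≤ 1 := rpow_le_one_of_one_le_of_nonpos he (by linarith)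

lemma calibratorValues_nonempty (u : ℝ) : (calibratorValues u).Nonempty :=
  ⟨_, 1 / 2, by norm_num, rfl⟩

lemma one_le_of_mem_upperBounds_calibratorValues {u b : ℝ} (hu₀ : 0 < u) (hu₁ : u ≤ 1)
    (hb : b ∈ upperBounds (calibratorValues u)) : 1 ≤ b :=
  (isLUB_Ioo zero_lt_one).2 fun ε hε =>
    (le_mul_of_one_le_right hε.1.le
      (one_le_rpow_of_pos_of_le_one_of_nonpos hu₀ hu₁ (by linarith [hε.2]))).trans
      (hb ⟨ε, hε, rfl⟩)

lemma isLUB_calibratorValues_of_le_exp_neg_one {u : ℝ} (hu₀ : 0 < u) (hu : u ≤ exp (-1)) :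
    IsLUB (calibratorValues u) (-exp (-1) / (u * log u)) := by
  have hu₁ : u < 1 := hu.trans_lt (exp_lt_one_iff.2 (by norm_num))
  refine ⟨fun v ⟨ε, _, hv⟩ => hv ▸ mul_rpow_sub_one_le hu₀ hu₁ ε, fun b hb => ?_⟩
  rcases hu.eq_or_lt with rfl | hlt
  · rw [log_exp, show -exp (-1) / (exp (-1) * -1) = 1 by field_simp]
    exact one_le_of_mem_upperBounds_calibratorValues hu₀ hu₁.le hb
  · have hL : 1 < -log u := by
      rw [lt_neg, ← log_exp (-1)]
      exact log_lt_log hu₀ hlt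
    rw [← inv_neg_log_mul_rpow hu₀ (by linarith)]
    exact hb ⟨_, ⟨inv_pos.2 (by linarith), inv_lt_one_of_one_lt₀ hL⟩, rfl⟩

lemma isLUB_calibratorValues_of_exp_neg_one_le {u : ℝ} (hu : exp (-1) ≤ u) (hu₁ : u ≤ 1) :
    IsLUB (calibratorValues u) 1 :=
  ⟨fun _ ⟨_, hε, hv⟩ => hv ▸ mul_rpow_sub_one_le_one hu hε.2.le,
    fun _ hb => one_le_of_mem_upperBounds_calibratorValues ((exp_pos _).trans_le hu) hu₁ hb⟩

lemma intervalIntegrable_inv_div_log {a b : ℝ} (ha : a ∈ Ioo (0 : ℝ) 1)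
    (hb : b ∈ Ioo (0 : ℝ) 1) :
    IntervalIntegrable (fun t => t⁻¹ / log t) volume a b := by
  have hsub := ordConnected_Ioo.uIcc_subset ha hb
  refine ContinuousOn.intervalIntegrable ?_
  have hne : ∀ t ∈ uIcc a b, t ≠ 0 ∧ log t ≠ 0 := fun t ht =>
    ⟨(hsub ht).1.ne', (log_neg (hsub ht).1 (hsub ht).2).ne⟩
  exact (continuousOn_inv₀.mono fun t ht => (hne t ht).1).div
    (continuousOn_log.mono fun t ht => (hne t ht).1) fun t ht => (hne t ht).2

lemma integral_inv_div_log_of_mem_Ioo {a b : ℝ} (ha : a ∈ Ioo (0 : ℝ) 1)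
    (hb : b ∈ Ioo (0 : ℝ) 1) :
    ∫ t in a..b, t⁻¹ / log t = log (log b) - log (log a) := by
  have hsub := ordConnected_Ioo.uIcc_subset ha hb
  -- `Real.log` is even, so `log (log t) = log |log t|` is an antiderivative on `(0,1)` too.
  refine intervalIntegral.integral_eq_sub_of_hasDerivAt (f := fun t => log (log t))
    (fun t ht => ?_) (intervalIntegrable_inv_div_log ha hb)
  obtain ⟨ht₀, ht₁⟩ := hsub ht
  exact hasDerivAt_log_log ht₀.ne' ht₁.ne (by linarith)

lemma one_lt_lintegral_vsCalibrator :
    1 < ∫⁻ u in Ioo (0 : ℝ) 1, ENNReal.ofReal (vsCalibrator u) := by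
  set a := exp (-exp 3)
  set b := exp (-1)
  have ha : a ∈ Ioo (0 : ℝ) 1 := ⟨exp_pos _, exp_lt_one_iff.2 (by simp [exp_pos])⟩
  have hb : b ∈ Ioo (0 : ℝ) 1 := ⟨exp_pos _, exp_lt_one_iff.2 (by norm_num)⟩
  have hab : a ≤ b := exp_le_exp.2 (by linarith [add_one_le_exp 3])
  have hsub : Ioc a b ⊆ Ioo 0 1 := fun t ht => ⟨ha.1.trans ht.1, ht.2.trans_lt hb.2⟩
  set g : ℝ → ℝ := fun t => -exp (-1) * (t⁻¹ / log t)
  have hg_int : ∫ t in a..b, g t = 3 * exp (-1) := by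
    simp only [g, intervalIntegral.integral_const_mul, integral_inv_div_log_of_mem_Ioo ha hb, a,
      b, log_exp, log_neg_eq_log, log_one]
    ring
  have hg_nonneg : ∀ t ∈ Ioc a b, 0 ≤ g t := fun t ht =>
    mul_nonneg_of_nonpos_of_nonpos (by simp [exp_pos, le_of_lt])
      (div_nonpos_of_nonneg_of_nonpos (inv_nonneg.2 (hsub ht).1.le)
        (log_neg (hsub ht).1 (hsub ht).2).le)
  calc (1 : ℝ≥0∞) < ENNReal.ofReal (3 * exp (-1)) := by
        rw [← ENNReal.ofReal_one, ENNReal.ofReal_lt_ofReal_iff (by positivity)]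
        linarith [exp_neg_one_gt_d9]
    _ = ENNReal.ofReal (∫ t in Ioc a b, g t) := by
        rw [← intervalIntegral.integral_of_le hab, hg_int]
    _ = ∫⁻ t in Ioc a b, ENNReal.ofReal (g t) :=
        ofReal_integral_eq_lintegral_ofReal
          ((intervalIntegrable_inv_div_log ha hb).const_mul _).1
          ((ae_restrict_iff' measurableSet_Ioc).2 (.of_forall hg_nonneg))
    _ = ∫⁻ t in Ioc a b, ENNReal.ofReal (vsCalibrator t) := by
        refine setLIntegral_congr_fun measurableSet_Ioc fun t ht => ?_
        rw [vsCalibrator, if_pos ht.2]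
        congr 1
        ring
    _ ≤ ∫⁻ t in Ioo 0 1, ENNReal.ofReal (vsCalibrator t) := lintegral_mono_set hsub

/-- The VS calibrator dominates the family `F_ε(u) = ε u^{ε-1}`: for `u ∈ (0,1]`,
the supremum over `ε ∈ (0,1)` equals `-e⁻¹/(u log u)` when `u ≤ e⁻¹` and `1`
when `u > e⁻¹`; moreover the VS calibrator is not a valid calibrator, since its
integral over `(0,1)` exceeds 1. -/
theorem vs_calibrator :
    (∀ u ∈ Set.Ioc (0 : ℝ) 1, u ≤ Real.exp (-1) →
      sSup {v : ℝ | ∃ ε ∈ Set.Ioo (0 : ℝ) 1, v = ε * u ^ (ε - 1)}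
        = -Real.exp (-1) / (u * Real.log u)) ∧
    (∀ u ∈ Set.Ioc (0 : ℝ) 1, Real.exp (-1) < u →
      sSup {v : ℝ | ∃ ε ∈ Set.Ioo (0 : ℝ) 1, v = ε * u ^ (ε - 1)} = 1) ∧
    (1 < ∫⁻ u in Set.Ioo (0 : ℝ) 1,
      ENNReal.ofReal
        (if u ≤ Real.exp (-1) then -Real.exp (-1) / (u * Real.log u) else 1)) :=
  ⟨fun u hu hue =>
      (isLUB_calibratorValues_of_le_exp_neg_one hu.1 hue).csSup_eq (calibratorValues_nonempty u),
    fun u hu hue =>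
      (isLUB_calibratorValues_of_exp_neg_one_le hue.le hu.2).csSup_eq
        (calibratorValues_nonempty u),
    one_lt_lintegral_vsCalibrator⟩
end
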